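/- arXiv:1004.3484 — 3 statements merged into one kernel-verified Lean document; each statement's English description precedes it below -/
import Mathlib

section
/- Let L ≥ 1 and let J ⊆ {1,…,L} be a nonempty set with |J| = l. For every α ∈ (0,1) there exist elements j₁, j₂ ∈ J such that l/2 ≤ j₁ ≤ j₂ ≤ (1+α) j₁ and |J ∩ [j₁, j₂]| ≥ c_α · l / log(2L/l), where c_α > 0 depends only on α. -/
/-!
At most `l/2` elements of `J` lie below `l/2`, so at least `l/2` lie in `[l/2, L]`. This range is
covered by the `K = ⌊log_{1+α}(2L/l)⌋ + 1` geometric blocks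
`[(l/2)(1+α)^b, (l/2)(1+α)^(b+1))`, and by pigeonhole one block contains at least `l/(2K)`
elements of `J`; its least and greatest elements are `j₁` and `j₂`. As `log₂(2L/l) ≥ 1`,
`K ≤ (1/log₂(1+α) + 1) · log₂(2L/l)`.
-/

open Real Finset

lemma card_sub_le_card_filter_le {J : Finset ℕ} (h0 : 0 ∉ J) {x : ℝ} (hx : 0 ≤ x) :
    (#J : ℝ) - x ≤ #(J.filter fun j : ℕ => x ≤ j) := by
  have hsmall : (J.filter fun j : ℕ => ¬ x ≤ j) ⊆ Icc 1 ⌊x⌋₊ := by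
    intro j hj
    obtain ⟨hjJ, hjx⟩ := mem_filter.mp hj
    have hj0 : j ≠ 0 := fun h => h0 (h ▸ hjJ)
    exact mem_Icc.mpr ⟨Nat.one_le_iff_ne_zero.mpr hj0, Nat.le_floor (not_le.mp hjx).le⟩
  have hcard : (#(J.filter fun j : ℕ => ¬ x ≤ j) : ℝ) ≤ x :=
    calc (#(J.filter fun j : ℕ => ¬ x ≤ j) : ℝ) ≤ ⌊x⌋₊ := by
          exact_mod_cast (card_le_card hsmall).trans (Nat.card_Icc 1 _).le
      _ ≤ x := Nat.floor_le hx
  have hsplit : (#(J.filter fun j : ℕ => x ≤ j) : ℝ) + #(J.filter fun j : ℕ => ¬ x ≤ j) = #J := by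
    exact_mod_cast card_filter_add_card_filter_not _
  linarith

lemma lt_mul_of_natFloor_logb_eq {β u v : ℝ} (hβ : 1 < β) (hu : 1 ≤ u) (hv : 0 < v)
    (h : ⌊logb β v⌋₊ = ⌊logb β u⌋₊) : v < β * u := by
  have hlog : logb β v < logb β (β * u) :=
    calc logb β v < ⌊logb β v⌋₊ + 1 := Nat.lt_floor_add_one _
      _ = ⌊logb β u⌋₊ + 1 := by rw [h]
      _ ≤ logb β u + 1 := by gcongr; exact Nat.floor_le (logb_nonneg hβ hu)
      _ = logb β (β * u) := by
          rw [logb_mul (by positivity) (by positivity), logb_self_eq_one hβ, add_comm]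
  exact (logb_lt_logb_iff hβ hv (by positivity)).mp hlog

/-- The fibres of `j ↦ ⌊log_β (j / x)⌋₊` on `[x, ∞)` are the geometric blocks `[x β^b, x β^(b+1))`. -/
lemma exists_dense_geometric_block {β x : ℝ} (hβ : 1 < β) (hx : 0 < x) {S : Finset ℕ}
    (hS : S.Nonempty) {K : ℕ} (hSK : ∀ j ∈ S, x ≤ j ∧ ⌊logb β (j / x)⌋₊ < K) :
    ∃ j₁ ∈ S, ∃ j₂ ∈ S, j₁ ≤ j₂ ∧ (j₂ : ℝ) < β * j₁ ∧ (#S : ℝ) / K ≤ #(S ∩ Icc j₁ j₂) := by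
  have hK : 0 < K := hS.elim fun j hj => Nat.zero_lt_of_lt (hSK j hj).2
  obtain ⟨b, -, hb⟩ := exists_le_card_fiber_of_nsmul_le_card_of_maps_to
    (f := fun j : ℕ => ⌊logb β (j / x)⌋₊) (t := range K) (b := (#S : ℝ) / K)
    (fun j hj => mem_range.mpr (hSK j hj).2) (nonempty_range_iff.mpr hK.ne')
    (by rw [card_range, nsmul_eq_mul, mul_div_cancel₀ _ (by positivity)])
  set F : Finset ℕ := {j ∈ S | ⌊logb β ((j : ℝ) / x)⌋₊ = b}
  have hF : F.Nonempty :=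
    card_pos.mp (by exact_mod_cast (by positivity : (0 : ℝ) < #S / K).trans_le hb)
  have hFS : F ⊆ S := filter_subset _ _
  have hmin := hFS (F.min'_mem hF)
  have hmax := hFS (F.max'_mem hF)
  refine ⟨F.min' hF, hmin, F.max' hF, hmax, F.min'_le _ (F.max'_mem hF), ?_, ?_⟩
  · have hratio := lt_mul_of_natFloor_logb_eq hβ
      ((one_le_div hx).mpr (hSK _ hmin).1) (div_pos (hx.trans_le (hSK _ hmax).1) hx)
      (((mem_filter.mp (F.max'_mem hF)).2).trans ((mem_filter.mp (F.min'_mem hF)).2).symm)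
    rwa [← mul_div_assoc, div_lt_div_iff_of_pos_right hx] at hratio
  · have hFI : F ⊆ S ∩ Icc (F.min' hF) (F.max' hF) := fun j hj =>
      mem_inter.mpr ⟨hFS hj, mem_Icc.mpr ⟨F.min'_le j hj, F.le_max' j hj⟩⟩
    exact hb.trans (by exact_mod_cast card_le_card hFI)

lemma natFloor_logb_add_one_le {β y : ℝ} (hβ : 1 < β) (hy : 2 ≤ y) :
    (⌊logb β y⌋₊ + 1 : ℝ) ≤ (1 / logb 2 β + 1) * logb 2 y := by
  have hβ2 : 0 < logb 2 β := logb_pos one_lt_two hβ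
  have hy1 : 1 ≤ logb 2 y := by
    simpa [logb_self_eq_one one_lt_two] using logb_le_logb_of_le one_lt_two two_pos hy
  have hchange : logb β y = logb 2 y / logb 2 β := by
    rw [logb, logb, logb, div_div_div_cancel_right₀ (log_pos one_lt_two).ne']
  calc (⌊logb β y⌋₊ + 1 : ℝ) ≤ logb 2 y / logb 2 β + logb 2 y := by
        gcongr
        rw [← hchange]
        exact Nat.floor_le (logb_nonneg hβ (by linarith))
    _ = (1 / logb 2 β + 1) * logb 2 y := by ring

lemma exists_dense_block_of_subset_Icc {β x : ℝ} (hβ : 1 < β) (hx : 0 < x) {L : ℕ}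
    {J : Finset ℕ} (hJL : J ⊆ Icc 1 L) (hJx : x < #J) :
    ∃ j₁ ∈ J, ∃ j₂ ∈ J, x ≤ j₁ ∧ j₁ ≤ j₂ ∧ (j₂ : ℝ) < β * j₁ ∧
      (#J - x) / (⌊logb β (L / x)⌋₊ + 1) ≤ #(J ∩ Icc j₁ j₂) := by
  set S := J.filter fun j : ℕ => x ≤ j
  have hS : #J - x ≤ #S := card_sub_le_card_filter_le (fun h => by simpa using hJL h) hx.le
  have hSK : ∀ j ∈ S, x ≤ j ∧ ⌊logb β (j / x)⌋₊ < ⌊logb β (L / x)⌋₊ + 1 := by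
    intro j hj
    obtain ⟨hjJ, hjx⟩ := mem_filter.mp hj
    have hjL : (j : ℝ) ≤ L := by exact_mod_cast (mem_Icc.mp (hJL hjJ)).2
    refine ⟨hjx, Nat.lt_succ_of_le (Nat.floor_le_floor (logb_le_logb_of_le hβ ?_ ?_))⟩
    · exact div_pos (hx.trans_le hjx) hx
    · exact div_le_div_of_nonneg_right hjL hx.le
  obtain ⟨j₁, hj₁, j₂, hj₂, h12, h21, hcount⟩ := exists_dense_geometric_block hβ hx
    (card_pos.mp (by exact_mod_cast (sub_pos.mpr hJx).trans_le hS)) hSK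
  refine ⟨j₁, filter_subset _ _ hj₁, j₂, filter_subset _ _ hj₂, (mem_filter.mp hj₁).2, h12, h21,
    ?_⟩
  calc (#J - x) / (⌊logb β (L / x)⌋₊ + 1) ≤ #S / (⌊logb β (L / x)⌋₊ + 1 : ℕ) := by
        push_cast; gcongr
    _ ≤ #(S ∩ Icc j₁ j₂) := hcount
    _ ≤ #(J ∩ Icc j₁ j₂) := by
        exact_mod_cast card_le_card (inter_subset_inter_right (filter_subset _ _))

/-- Regularization Lemma: for a nonempty `J ⊆ {1,…,L}` with `|J| = l` and `α ∈ (0,1)`,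
there exist `j₁, j₂ ∈ J` with `l/2 ≤ j₁ ≤ j₂ ≤ (1+α) j₁` and
`|J ∩ [j₁, j₂]| ≥ c_α · l / log₂(2L/l)`, where `c_α > 0` depends only on `α`. -/
theorem stmt2 (α : ℝ) (hα : α ∈ Set.Ioo (0:ℝ) 1) :
    ∃ c > 0, ∀ (L : ℕ) (J : Finset ℕ), 1 ≤ L → J ⊆ Finset.Icc 1 L → J.Nonempty →
      ∃ j₁ ∈ J, ∃ j₂ ∈ J,
        (J.card : ℝ) / 2 ≤ j₁ ∧ j₁ ≤ j₂ ∧ (j₂ : ℝ) ≤ (1 + α) * j₁ ∧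
        c * J.card / Real.logb 2 (2 * L / J.card) ≤ ((J ∩ Finset.Icc j₁ j₂).card : ℝ) := by
  obtain ⟨hα, -⟩ := hα
  have hβ : 1 < 1 + α := by linarith
  set D := 1 / logb 2 (1 + α) + 1
  have hD : 0 < D := by have := logb_pos one_lt_two hβ; positivity
  refine ⟨1 / (2 * D), by positivity, fun L J _ hJL hJ => ?_⟩
  set l : ℝ := (#J : ℝ)
  have hl : 0 < l := Nat.cast_pos.mpr hJ.card_pos
  have hlL : l ≤ L := by simpa [l] using card_le_card hJL
  obtain ⟨j₁, hj₁, j₂, hj₂, hj₁l, h12, h21, hcount⟩ :=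
    exists_dense_block_of_subset_Icc hβ (half_pos hl) hJL (half_lt_self hl)
  have hLl : (L : ℝ) / (l / 2) = 2 * L / l := by field_simp
  have hK := natFloor_logb_add_one_le hβ (y := 2 * L / l) (by rw [le_div_iff₀ hl]; linarith)
  refine ⟨j₁, hj₁, j₂, hj₂, hj₁l, h12, h21.le, ?_⟩
  rw [hLl, sub_half] at hcount
  calc 1 / (2 * D) * l / logb 2 (2 * L / l) = l / 2 / (D * logb 2 (2 * L / l)) := by
        field_simp
    _ ≤ l / 2 / (⌊logb (1 + α) (2 * L / l)⌋₊ + 1) :=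
        div_le_div_of_nonneg_left (half_pos hl).le (by positivity) hK
    _ ≤ _ := hcount
end

section
/- Let b ∈ ℝᵐ (m ≥ 4), α ∈ (0,1), with ‖b‖_{1,∞} ≤ 1 and ‖b‖₁ ≥ C_α (log₂ log₂ m)². Then there exist a positive integer l ≤ log₂ m and a subset I₁ ⊆ [m] with n₁ := |I₁| satisfying m/n₁ ≥ 2^{l/2} and |bᵢ| ≥ 1/(l·n₁) for all i ∈ I₁. -/
/-!
Suppose the conclusion fails. Taking for `I₁` the `n + 1` largest entries shows that the
non-increasing rearrangement satisfies `b*ₙ < 1 / (l (n + 1))` whenever `1 ≤ l ≤ log₂ m` and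
`(n + 1) 2 ^ l ≤ m`. Cut `[0, m)` into the tail `[m / 2, m)` and the blocks
`[m / 2 ^ 2 ^ (j + 1), m / 2 ^ 2 ^ j)` for `j ≤ log₂ log₂ m` (the last one starts at `0`).
On block `j` we may take `l = 2 ^ j`, and the harmonic sum over the block is at most
`2 ^ j log 2 + 1`, so every block (and the tail, with `l = 1`) contributes at most `2`.
Hence `‖b‖₁ ≤ 2 (log₂ log₂ m + 2)`, which is incompatible with `‖b‖₁ ≥ 7 (log₂ log₂ m)²`.
-/

noncomputable def rearrange {m : ℕ} (b : Fin m → ℝ) : Fin m → ℝ :=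
  fun i => |b (Tuple.sort (fun j => -|b j|) i)|

open Finset Real

lemma sum_Ico_inv_succ_le {a b : ℕ} (hab : a ≤ b) :
    ∑ n ∈ Ico a b, 1 / ((n : ℝ) + 1) ≤ 1 + log b - log (a + 1) := by
  have harmonic_eq (k : ℕ) :
      ((harmonic k : ℚ) : ℝ) = ∑ n ∈ range k, 1 / ((n : ℝ) + 1) := by
    simp [harmonic]
  rw [sum_Ico_eq_sub _ hab, ← harmonic_eq, ← harmonic_eq]
  have := log_add_one_le_harmonic a
  push_cast at this
  linarith [harmonic_le_one_add_log b]

lemma log_le_log_div_pow_add_one (b l : ℕ) :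
    log b ≤ log ((b / 2 ^ l : ℕ) + 1) + l * log 2 := by
  rcases Nat.eq_zero_or_pos b with rfl | hb
  · simp only [Nat.cast_zero, log_zero, Nat.zero_div, zero_add, log_one]
    positivity
  · have hlt : b < b / 2 ^ l * 2 ^ l + 2 ^ l := Nat.lt_div_mul_add (by positivity)
    have hlt' : (b : ℝ) ≤ ((b / 2 ^ l : ℕ) + 1) * 2 ^ l := by
      rw [add_one_mul]; exact_mod_cast hlt.le
    calc log b ≤ log (((b / 2 ^ l : ℕ) + 1) * 2 ^ l) := log_le_log (by positivity) hlt'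
      _ = log ((b / 2 ^ l : ℕ) + 1) + l * log 2 := by
        rw [log_mul (by positivity) (by positivity), log_pow]

lemma sum_Ico_div_two_pow_le_two {u : ℕ → ℝ} {b l : ℕ} (hl : 1 ≤ l)
    (hu : ∀ n ∈ Ico (b / 2 ^ l) b, u n ≤ 1 / (l * ((n : ℝ) + 1))) :
    ∑ n ∈ Ico (b / 2 ^ l) b, u n ≤ 2 := by
  have hl' : (1 : ℝ) ≤ l := by exact_mod_cast hl
  calc ∑ n ∈ Ico (b / 2 ^ l) b, u n
      ≤ ∑ n ∈ Ico (b / 2 ^ l) b, (l : ℝ)⁻¹ * (1 / ((n : ℝ) + 1)) :=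
        sum_le_sum fun n hn => (hu n hn).trans_eq (by rw [one_div, one_div, mul_inv])
    _ = (l : ℝ)⁻¹ * ∑ n ∈ Ico (b / 2 ^ l) b, 1 / ((n : ℝ) + 1) := (mul_sum ..).symm
    _ ≤ (l : ℝ)⁻¹ * (1 + l * log 2) := by
        gcongr
        linarith [sum_Ico_inv_succ_le (Nat.div_le_self b (2 ^ l)), log_le_log_div_pow_add_one b l]
    _ = (l : ℝ)⁻¹ + log 2 := by field_simp
    _ ≤ 2 := by linarith [inv_le_one_of_one_le₀ hl', log_two_lt_d9]

lemma sum_Ico_eq_sum_range_of_antitone {M : Type*} [AddCommMonoid M] {c : ℕ → ℕ}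
    (hc : Antitone c) (f : ℕ → M) (k : ℕ) :
    ∑ n ∈ Ico (c k) (c 0), f n = ∑ j ∈ range k, ∑ n ∈ Ico (c (j + 1)) (c j), f n := by
  induction k with
  | zero => simp
  | succ k ih =>
    rw [sum_range_succ, ← ih, ← sum_Ico_consecutive _ (hc k.le_succ) (hc k.zero_le), add_comm]

lemma sum_range_le_of_le_inv_mul {u : ℕ → ℝ} {m : ℕ} (hm : 2 ≤ m)
    (hu : ∀ n < m, u n ≤ 1 / ((n : ℝ) + 1))
    (hul : ∀ l n : ℕ, 1 ≤ l → l ≤ Nat.log 2 m → (n + 1) * 2 ^ l ≤ m →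
      u n ≤ 1 / (l * ((n : ℝ) + 1))) :
    ∑ n ∈ range m, u n ≤ 2 * (Nat.log 2 (Nat.log 2 m) + 2) := by
  set J := Nat.log 2 (Nat.log 2 m)
  set c : ℕ → ℕ := fun j => m / 2 ^ 2 ^ j with hc
  have hc_succ (j : ℕ) : c (j + 1) = c j / 2 ^ 2 ^ j := by
    simp only [hc, Nat.div_div_eq_div_mul, ← pow_add, pow_succ, mul_two]
  have hc_anti : Antitone c := fun i j hij =>
    Nat.div_le_div_left (Nat.pow_le_pow_right two_pos (Nat.pow_le_pow_right two_pos hij))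
      (by positivity)
  have hc_last : c (J + 1) = 0 := by
    refine Nat.div_eq_of_lt ((Nat.lt_pow_succ_log_self one_lt_two m).trans_le ?_)
    exact Nat.pow_le_pow_right two_pos (Nat.lt_pow_succ_log_self one_lt_two _)
  have hblock (j : ℕ) (hj : j ≤ J) : ∑ n ∈ Ico (c (j + 1)) (c j), u n ≤ 2 := by
    rw [hc_succ]
    refine sum_Ico_div_two_pow_le_two Nat.one_le_two_pow
      fun n hn => hul _ _ Nat.one_le_two_pow ?_ ?_
    · exact (Nat.pow_le_pow_right two_pos hj).trans
        (Nat.pow_log_le_self 2 (Nat.log_pos one_lt_two hm).ne')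
    · exact (Nat.mul_le_mul_right _ (mem_Ico.1 hn).2).trans (Nat.div_mul_le_self _ _)
  have htail : ∑ n ∈ Ico (m / 2 ^ 1) m, u n ≤ 2 :=
    sum_Ico_div_two_pow_le_two le_rfl fun n hn => by simpa using hu n (mem_Ico.1 hn).2
  calc ∑ n ∈ range m, u n
      = ∑ n ∈ Ico (c (J + 1)) (c 0), u n + ∑ n ∈ Ico (m / 2 ^ 1) m, u n := by
        rw [hc_last, range_eq_Ico]
        exact (sum_Ico_consecutive u (Nat.zero_le (c 0)) (Nat.div_le_self _ _)).symm
    _ = ∑ j ∈ range (J + 1), ∑ n ∈ Ico (c (j + 1)) (c j), u n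
          + ∑ n ∈ Ico (m / 2 ^ 1) m, u n := by
        rw [sum_Ico_eq_sum_range_of_antitone hc_anti]
    _ ≤ ∑ j ∈ range (J + 1), 2 + 2 :=
        add_le_add (sum_le_sum fun j hj => hblock j (Nat.lt_succ_iff.1 (mem_range.1 hj))) htail
    _ = 2 * (J + 2) := by simp; ring

section Rearrangement

variable {m : ℕ} (b : Fin m → ℝ)

lemma rearrange_antitone : Antitone (rearrange b) := fun _ _ hij => by
  simpa [rearrange] using Tuple.monotone_sort (fun j => -|b j|) hij

lemma sum_rearrange : ∑ i, rearrange b i = ∑ i, |b i| :=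
  Equiv.sum_comp (Tuple.sort fun j => -|b j|) fun i => |b i|

variable {b}

lemma rearrange_lt_of_forall_card_eq {r : ℝ} (k : Fin m)
    (h : ∀ I : Finset (Fin m), #I = k + 1 → ∃ i ∈ I, |b i| < r) : rearrange b k < r := by
  obtain ⟨_, hi, hlt⟩ := h ((Iic k).map (Tuple.sort fun j => -|b j|).toEmbedding) (by simp)
  obtain ⟨j, hj, rfl⟩ := mem_map.1 hi
  exact (rearrange_antitone b (mem_Iic.1 hj)).trans_lt hlt

lemma sum_abs_le_of_forall_exists_abs_lt (hm : 2 ≤ m)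
    (hb : ∀ i : Fin m, rearrange b i ≤ 1 / ((i : ℝ) + 1))
    (h : ∀ (l : ℕ) (I : Finset (Fin m)), 1 ≤ l → (l : ℝ) ≤ logb 2 m →
      (2 : ℝ) ^ ((l : ℝ) / 2) ≤ m / #I → ∃ i ∈ I, |b i| < 1 / (l * #I)) :
    ∑ i, |b i| ≤ 2 * (Nat.log 2 (Nat.log 2 m) + 2) := by
  set u : ℕ → ℝ := fun n => if hn : n < m then rearrange b ⟨n, hn⟩ else 0 with hu
  have hsum : ∑ i, |b i| = ∑ n ∈ range m, u n := by
    rw [← sum_rearrange, ← Fin.sum_univ_eq_sum_range]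
    simp [hu]
  rw [hsum]
  refine sum_range_le_of_le_inv_mul hm (fun n hn => by simpa [hu, hn] using hb ⟨n, hn⟩)
    fun l n hl hlm hnl => ?_
  have hn : n < m := Nat.lt_of_succ_le ((Nat.le_mul_of_pos_right _ (by positivity)).trans hnl)
  simp only [hu, dif_pos hn]
  refine (rearrange_lt_of_forall_card_eq ⟨n, hn⟩ fun I hI => ?_).le
  have hlm' : (l : ℝ) ≤ logb 2 m := (Nat.cast_le.2 hlm).trans (natLog_le_logb m 2)
  have hpow : (2 : ℝ) ^ ((l : ℝ) / 2) ≤ m / #I := by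
    rw [hI, le_div_iff₀ (by positivity)]
    push_cast
    calc (2 : ℝ) ^ ((l : ℝ) / 2) * (n + 1) ≤ 2 ^ (l : ℝ) * (n + 1) := by
          gcongr
          · norm_num
          · linarith [(Nat.cast_nonneg l : (0 : ℝ) ≤ l)]
      _ ≤ m := by rw [rpow_natCast, mul_comm]; exact_mod_cast hnl
  simpa [hI] using h l I hl hlm' hpow

end Rearrangement

theorem stmt8_general :
    ∃ C > 0, ∀ (m : ℕ) (b : Fin m → ℝ), 4 ≤ m →
      (∀ i : Fin m, rearrange b i ≤ 1 / ((i:ℝ)+1)) →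
      C * (Real.logb 2 (Real.logb 2 m))^2 ≤ ∑ i, |b i| →
      ∃ (l : ℕ) (I₁ : Finset (Fin m)), 1 ≤ l ∧ (l : ℝ) ≤ Real.logb 2 m ∧
        (2:ℝ) ^ ((l:ℝ)/2) ≤ (m:ℝ) / I₁.card ∧
        ∀ i ∈ I₁, 1 / ((l:ℝ) * I₁.card) ≤ |b i| := by
  refine ⟨7, by norm_num, fun m b hm hb hsum => ?_⟩
  by_contra hcon
  push Not at hcon
  have hbound := sum_abs_le_of_forall_exists_abs_lt (by omega) hb hcon
  have hlog_pos : (0 : ℝ) < Nat.log 2 m := by exact_mod_cast Nat.log_pos one_lt_two (by omega)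
  have hJ : (Nat.log 2 (Nat.log 2 m) : ℝ) ≤ logb 2 (logb 2 m) :=
    (natLog_le_logb _ 2).trans (logb_le_logb_of_le one_lt_two hlog_pos (natLog_le_logb m 2))
  have hD : 1 ≤ logb 2 (logb 2 m) := by
    have h2 : 2 ≤ logb 2 m :=
      (le_logb_iff_rpow_le one_lt_two (by positivity)).2 (by norm_num; exact_mod_cast hm)
    exact (le_logb_iff_rpow_le one_lt_two (by positivity)).2 (by simpa using h2)
  nlinarith

/-- Simplified Structure Proposition for divergent series: if `‖b‖_{1,∞} ≤ 1`
(i.e. `b*_i ≤ 1/i`) and `‖b‖₁ ≥ C_α (log₂ log₂ m)²`, then there exist `1 ≤ l ≤ log₂ m`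
and `I₁ ⊆ [m]` with `m/|I₁| ≥ 2^{l/2}` and `|bᵢ| ≥ 1/(l|I₁|)` for all `i ∈ I₁`. -/
theorem stmt8 (α : ℝ) (hα : α ∈ Set.Ioo (0:ℝ) 1) :
    ∃ C > 0, ∀ (m : ℕ) (b : Fin m → ℝ), 4 ≤ m →
      (∀ i : Fin m, rearrange b i ≤ 1 / ((i:ℝ)+1)) →
      C * (Real.logb 2 (Real.logb 2 m))^2 ≤ ∑ i, |b i| →
      ∃ (l : ℕ) (I₁ : Finset (Fin m)), 1 ≤ l ∧ (l : ℝ) ≤ Real.logb 2 m ∧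
        (2:ℝ) ^ ((l:ℝ)/2) ≤ (m:ℝ) / I₁.card ∧
        ∀ i ∈ I₁, 1 / ((l:ℝ) * I₁.card) ≤ |b i| :=
  stmt8_general
end

section
/- Let E_B = {i ∈ [N] : |⟨Xᵢ, x⟩| ≥ B} for a fixed x and B > 0, and suppose the weak-ℓ₂ bound ‖(⟨Xᵢ, x⟩)_{i ∈ E_B}‖_{2,∞}² ≤ C(n + t²(N/|E_B|)^{4/q}|E_B|) holds. Then |E_B| ≤ C'_q (n/B² + N(t/B)^{q/2}). -/
/-!
On `E_B` every coefficient is at least `B` in absolute value, so taking `S = E_B` in the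
definition of the weak ℓ₂ norm gives `B² |E_B| ≤ ‖·‖²_{2,∞}`. With `m = |E_B|` the hypothesis
becomes `B² m ≤ C (n + t² (N/m)^{4/q} m)`; whichever of the two summands dominates gives
either `m ≤ 2C n / B²` or, after cancelling `m` and raising to the power `q/4`,
`m ≤ (2C)^{q/4} N (t/B)^{q/2}`.
-/

open scoped RealInnerProductSpace

/-- The square of the weak ℓ₂ norm of the finite sequence `(a i)_{i ∈ s}`:
`‖a‖²_{2,∞} = max_k k · (a*_k)² = max over nonempty `S ⊆ s` of `|S| · min_{i ∈ S} (a i)²`,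
where `a*` is the non-increasing rearrangement of `(|a i|)`. -/
noncomputable def weakL2Sq {ι : Type*} [DecidableEq ι] (s : Finset ι) (a : ι → ℝ) : ℝ :=
  Finset.fold max 0
    (fun S => if h : S.Nonempty then (S.card : ℝ) * S.inf' h (fun i => (a i)^2) else 0)
    s.powerset

theorem card_mul_sq_le_weakL2Sq {ι : Type*} [DecidableEq ι] {s : Finset ι} {a : ι → ℝ} {B : ℝ}
    (hB : ∀ i ∈ s, B ^ 2 ≤ a i ^ 2) : (s.card : ℝ) * B ^ 2 ≤ weakL2Sq s a := by
  rcases s.eq_empty_or_nonempty with rfl | hs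
  · simp [weakL2Sq]
  rw [weakL2Sq, Finset.le_fold_max]
  refine Or.inr ⟨s, Finset.mem_powerset_self s, ?_⟩
  rw [dif_pos hs]
  exact mul_le_mul_of_nonneg_left (Finset.le_inf' hs _ hB) (Nat.cast_nonneg _)

theorem le_mul_rpow_of_sq_le_mul_rpow {q D B m N : ℝ} (hq : 0 < q) (hD : 0 < D) (hB : 0 < B)
    (hm : 0 < m) (hN : 0 ≤ N) (h : B ^ 2 ≤ D * (N / m) ^ (4 / q)) :
    m ≤ N * (D / B ^ 2) ^ (q / 4) := by
  have hlow : B ^ 2 / D ≤ (N / m) ^ (q / 4)⁻¹ := by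
    rw [inv_div, div_le_iff₀ hD, mul_comm]; exact h
  rw [Real.le_rpow_inv_iff_of_pos (by positivity) (by positivity) (by positivity),
    le_div_iff₀ hm] at hlow
  have hpow : (D / B ^ 2) ^ (q / 4) = ((B ^ 2 / D) ^ (q / 4))⁻¹ := by
    rw [← Real.inv_rpow (by positivity), inv_div]
  rw [hpow, ← div_eq_mul_inv, le_div_iff₀ (by positivity), mul_comm]
  exact hlow

theorem mul_sq_div_sq_rpow {c t B : ℝ} (hc : 0 ≤ c) (ht : 0 ≤ t) (hB : 0 ≤ B) (q : ℝ) :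
    (c * t ^ 2 / B ^ 2) ^ (q / 4) = c ^ (q / 4) * (t / B) ^ (q / 2) := by
  rw [mul_div_assoc, ← div_pow, Real.mul_rpow hc (by positivity), ← Real.rpow_natCast,
    ← Real.rpow_mul (by positivity)]
  congr 2
  push_cast
  ring

theorem le_of_mul_sq_le_add_rpow {q C n N t B m : ℝ} (hq : 0 < q) (hC : 0 < C)
    (hn : 0 ≤ n) (hN : 0 ≤ N) (ht : 0 < t) (hB : 0 < B) (hm : 0 < m)
    (h : m * B ^ 2 ≤ C * (n + t ^ 2 * (N / m) ^ (4 / q) * m)) :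
    m ≤ (2 * C + (2 * C) ^ (q / 4)) * (n / B ^ 2 + N * (t / B) ^ (q / 2)) := by
  have hn' : 0 ≤ n / B ^ 2 := by positivity
  have hN' : 0 ≤ N * (t / B) ^ (q / 2) := by positivity
  have hK : 0 ≤ (2 * C) ^ (q / 4) := by positivity
  rcases le_total (t ^ 2 * (N / m) ^ (4 / q) * m) n with hsmall | hlarge
  · have hm_le : m ≤ 2 * C * (n / B ^ 2) := by
      rw [mul_div_assoc', le_div_iff₀ (by positivity)]
      nlinarith
    nlinarith
  · have hsq : B ^ 2 ≤ 2 * C * t ^ 2 * (N / m) ^ (4 / q) :=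
      le_of_mul_le_mul_right (by nlinarith) hm
    have hm_le := le_mul_rpow_of_sq_le_mul_rpow hq (by positivity) hB hm hN hsq
    rw [mul_sq_div_sq_rpow (by positivity) ht.le hB.le] at hm_le
    nlinarith

open Classical in
/-- Lemma 5.2 (large coefficients, deterministic step): if
`E_B = {i : |⟨Xᵢ, x⟩| ≥ B}` satisfies the weak-ℓ₂ bound
`‖(⟨Xᵢ,x⟩)_{i∈E_B}‖²_{2,∞} ≤ C (n + t² (N/|E_B|)^{4/q} |E_B|)`, then
`|E_B| ≤ C'_q (n/B² + N (t/B)^{q/2})`. -/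
theorem stmt15 (q C : ℝ) (hq : 4 < q) (hC : 0 < C) :
    ∃ C' > 0, ∀ (n N : ℕ) (t B : ℝ), 1 ≤ t → 0 < B →
      ∀ (X : Fin N → EuclideanSpace ℝ (Fin n)) (x : EuclideanSpace ℝ (Fin n))
        (E : Finset (Fin N)),
      E = Finset.univ.filter (fun i => B ≤ |(⟪X i, x⟫)|) →
      weakL2Sq E (fun i => (⟪X i, x⟫)) ≤
        C * ((n:ℝ) + t^2 * ((N:ℝ)/E.card)^((4:ℝ)/q) * E.card) →
      (E.card : ℝ) ≤ C' * ((n:ℝ)/B^2 + N * (t/B)^(q/2)) := by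
  refine ⟨2 * C + (2 * C) ^ (q / 4), by positivity, ?_⟩
  intro n N t B ht hB X x E hE hweak
  rcases E.eq_empty_or_nonempty with rfl | hE_ne
  · simp only [Finset.card_empty, Nat.cast_zero]
    positivity
  have hlarge : ∀ i ∈ E, B ^ 2 ≤ ⟪X i, x⟫ ^ 2 := by
    intro i hi
    rw [hE, Finset.mem_filter] at hi
    simpa only [sq_abs] using pow_le_pow_left₀ hB.le hi.2 2
  have hcard : (E.card : ℝ) * B ^ 2 ≤ C * (n + t ^ 2 * (N / E.card) ^ (4 / q) * E.card) :=
    (card_mul_sq_le_weakL2Sq hlarge).trans hweak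
  exact le_of_mul_sq_le_add_rpow (by linarith) hC n.cast_nonneg N.cast_nonneg
    (by linarith) hB (by exact_mod_cast hE_ne.card_pos) hcard
end
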